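/- arXiv:1906.01598 — 2 statements merged into one kernel-verified Lean document; each statement's English description precedes it below -/
import Mathlib

section
/- Discrete maximum principle: Let Ψ be a mesh function on the grid {x_0=0 < x_1 < ... < x_N = 1} × {t_0=0 < t_1 < ... < t_M}. Suppose for all k ≥ 1: Ψ(0,t_k) − D⁺_x Ψ(0,t_k) ≥ 0 and Ψ(1,t_k) + D⁻_x Ψ(1,t_k) ≥ 0; Ψ(x_j,0) ≥ 0 for all j; and L^{N,M}Ψ(x_j,t_k) := D⁻_t Ψ − ε δ²_x Ψ + a Ψ ≥ 0 at all interior mesh points (1 ≤ j ≤ N−1, 1 ≤ k ≤ M), where ε > 0 and a(x_j,t_k) > 0. Then Ψ ≥ 0 at all mesh points. -/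
/-!
Induct on the time level. If `Ψ(·, t_k)` were negative somewhere, look at a point where it attains
its minimum over `x_0, …, x_N`. At `x_0` or `x_N` the one-sided difference has the wrong sign for the
Robin condition. At an interior point `D⁻_t Ψ ≤ 0` (the previous level is nonnegative),
`δ²_x Ψ ≥ 0` and `a Ψ < 0`, so `L^{N,M} Ψ < 0`.
-/

lemma robin_left_neg_of_le {x₀ x₁ u₀ u₁ : ℝ} (hx : x₀ ≤ x₁) (hu : u₀ ≤ u₁) (hneg : u₀ < 0) :
    u₀ - (u₁ - u₀) / (x₁ - x₀) < 0 := by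
  have : 0 ≤ (u₁ - u₀) / (x₁ - x₀) := div_nonneg (sub_nonneg.2 hu) (sub_nonneg.2 hx)
  linarith

lemma robin_right_neg_of_le {x₀ x₁ u₀ u₁ : ℝ} (hx : x₀ ≤ x₁) (hu : u₁ ≤ u₀) (hneg : u₁ < 0) :
    u₁ + (u₁ - u₀) / (x₁ - x₀) < 0 := by
  have : (u₁ - u₀) / (x₁ - x₀) ≤ 0 :=
    div_nonpos_of_nonpos_of_nonneg (sub_nonpos.2 hu) (sub_nonneg.2 hx)
  linarith

lemma implicit_scheme_neg_of_local_min {ε a τ xl xm xr ul um ur v : ℝ} (hε : 0 ≤ ε) (ha : 0 < a)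
    (hτ : 0 ≤ τ) (hxl : xl ≤ xm) (hxr : xm ≤ xr) (hv : 0 ≤ v) (hul : um ≤ ul) (hur : um ≤ ur)
    (hneg : um < 0) :
    (um - v) / τ - ε * (((ur - um) / (xr - xm) - (um - ul) / (xm - xl)) / ((xr - xl) / 2))
      + a * um < 0 := by
  have htime : (um - v) / τ ≤ 0 := div_nonpos_of_nonpos_of_nonneg (by linarith) hτ
  have hright : 0 ≤ (ur - um) / (xr - xm) := div_nonneg (by linarith) (by linarith)
  have hleft : (um - ul) / (xm - xl) ≤ 0 := div_nonpos_of_nonpos_of_nonneg (by linarith) (by linarith)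
  have hdiffusion : 0 ≤ ε * (((ur - um) / (xr - xm) - (um - ul) / (xm - xl)) / ((xr - xl) / 2)) :=
    mul_nonneg hε (div_nonneg (by linarith) (by linarith))
  have hreaction : a * um < 0 := mul_neg_of_pos_of_neg ha hneg
  linarith

lemma apply_sub_one_le_of_forall_lt_succ {N : ℕ} {x : ℕ → ℝ}
    (hx : ∀ j, j < N → x j < x (j + 1)) {j : ℕ} (hj : j ≤ N) : x (j - 1) ≤ x j := by
  rcases Nat.eq_zero_or_pos j with rfl | hpos
  · exact le_rfl
  · have := hx (j - 1) (by omega)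
    rw [Nat.sub_add_cancel hpos] at this
    exact this.le

theorem nonneg_of_implicit_step {N : ℕ} {ε τ : ℝ} (hε : 0 ≤ ε) (hτ : 0 ≤ τ) {x a u v : ℕ → ℝ}
    (hx : ∀ j, j < N → x j < x (j + 1)) (ha : ∀ j ≤ N, 0 < a j) (hv : ∀ j ≤ N, 0 ≤ v j)
    (hleft : 0 ≤ u 0 - (u 1 - u 0) / (x 1 - x 0))
    (hright : 0 ≤ u N + (u N - u (N - 1)) / (x N - x (N - 1)))
    (hL : ∀ j, 1 ≤ j → j < N →
      0 ≤ (u j - v j) / τ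
        - ε * (((u (j + 1) - u j) / (x (j + 1) - x j) - (u j - u (j - 1)) / (x j - x (j - 1)))
          / ((x (j + 1) - x (j - 1)) / 2))
        + a j * u j) :
    ∀ j ≤ N, 0 ≤ u j := by
  by_contra! hsome
  obtain ⟨j₀, hj₀, hj₀neg⟩ := hsome
  obtain ⟨m, hmN, hmin⟩ := (Finset.Iic N).exists_min_image u ⟨j₀, Finset.mem_Iic.2 hj₀⟩
  rw [Finset.mem_Iic] at hmN
  have hmin' : ∀ j ≤ N, u m ≤ u j := fun j hj => hmin j (Finset.mem_Iic.2 hj)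
  have hmneg : u m < 0 := (hmin' j₀ hj₀).trans_lt hj₀neg
  rcases eq_or_lt_of_le hmN with rfl | hmlt
  · exact (robin_right_neg_of_le (apply_sub_one_le_of_forall_lt_succ hx le_rfl)
      (hmin' _ (Nat.sub_le _ _)) hmneg).not_ge hright
  rcases Nat.eq_zero_or_pos m with rfl | hmpos
  · exact (robin_left_neg_of_le (hx 0 hmlt).le (hmin' 1 hmlt) hmneg).not_ge hleft
  · exact (implicit_scheme_neg_of_local_min hε (ha m hmN) hτ
      (apply_sub_one_le_of_forall_lt_succ hx hmN) (hx m hmlt).le (hv m hmN)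
      (hmin' _ (by omega)) (hmin' _ hmlt) hmneg).not_ge (hL m hmpos hmlt)

theorem stmt_9_general (N M : ℕ)
    (ε : ℝ) (hε : 0 < ε)
    (x t : ℕ → ℝ)
    (hxmono : ∀ j, j < N → x j < x (j + 1))
    (htmono : ∀ k, k < M → t k < t (k + 1))
    (a Ψ : ℕ → ℕ → ℝ)
    (ha : ∀ j ≤ N, ∀ k ≤ M, 0 < a j k)
    -- Robin boundary conditions at x = 0 and x = 1, for k ≥ 1
    (hβ0 : ∀ k, 1 ≤ k → k ≤ M →
      0 ≤ Ψ 0 k - (Ψ 1 k - Ψ 0 k) / (x 1 - x 0))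
    (hβ1 : ∀ k, 1 ≤ k → k ≤ M →
      0 ≤ Ψ N k + (Ψ N k - Ψ (N - 1) k) / (x N - x (N - 1)))
    -- initial condition
    (hinit : ∀ j ≤ N, 0 ≤ Ψ j 0)
    -- L^{N,M} Ψ ≥ 0 at interior mesh points
    (hL : ∀ j k, 1 ≤ j → j < N → 1 ≤ k → k ≤ M →
      0 ≤ (Ψ j k - Ψ j (k - 1)) / (t k - t (k - 1))
        - ε * (((Ψ (j + 1) k - Ψ j k) / (x (j + 1) - x j)
              - (Ψ j k - Ψ (j - 1) k) / (x j - x (j - 1)))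
            / ((x (j + 1) - x (j - 1)) / 2))
        + a j k * Ψ j k) :
    ∀ j ≤ N, ∀ k ≤ M, 0 ≤ Ψ j k := by
  intro j hj k hk
  induction k generalizing j with
  | zero => exact hinit j hj
  | succ k ih =>
    refine nonneg_of_implicit_step hε.le (sub_nonneg.2 (htmono k hk).le) hxmono
      (fun j hj => ha j hj (k + 1) hk) (fun j hj => ih j hj (by omega))
      (hβ0 (k + 1) (by omega) hk) (hβ1 (k + 1) (by omega) hk)
      (fun j h₁ h₂ => by simpa using hL j (k + 1) h₁ h₂ (by omega) hk) j hj

/-- Discrete maximum principle for the finite difference operator. -/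
theorem stmt_9 (N M : ℕ) (hN : 2 ≤ N) (hM : 1 ≤ M)
    (ε : ℝ) (hε : 0 < ε)
    (x t : ℕ → ℝ)
    (hx0 : x 0 = 0) (hxN : x N = 1) (hxmono : ∀ j, j < N → x j < x (j + 1))
    (ht0 : t 0 = 0) (htmono : ∀ k, k < M → t k < t (k + 1))
    (a Ψ : ℕ → ℕ → ℝ)
    (ha : ∀ j ≤ N, ∀ k ≤ M, 0 < a j k)
    -- Robin boundary conditions at x = 0 and x = 1, for k ≥ 1
    (hβ0 : ∀ k, 1 ≤ k → k ≤ M →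
      0 ≤ Ψ 0 k - (Ψ 1 k - Ψ 0 k) / (x 1 - x 0))
    (hβ1 : ∀ k, 1 ≤ k → k ≤ M →
      0 ≤ Ψ N k + (Ψ N k - Ψ (N - 1) k) / (x N - x (N - 1)))
    -- initial condition
    (hinit : ∀ j ≤ N, 0 ≤ Ψ j 0)
    -- L^{N,M} Ψ ≥ 0 at interior mesh points
    (hL : ∀ j k, 1 ≤ j → j < N → 1 ≤ k → k ≤ M →
      0 ≤ (Ψ j k - Ψ j (k - 1)) / (t k - t (k - 1))
        - ε * (((Ψ (j + 1) k - Ψ j k) / (x (j + 1) - x j)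
              - (Ψ j k - Ψ (j - 1) k) / (x j - x (j - 1)))
            / ((x (j + 1) - x (j - 1)) / 2))
        + a j k * Ψ j k) :
    ∀ j ≤ N, ∀ k ≤ M, 0 ≤ Ψ j k :=
  stmt_9_general N M ε hε x t hxmono htmono a Ψ ha hβ0 hβ1 hinit hL
end

section
/- Discrete stability: Under the hypotheses of the discrete maximum principle (a > α > 0 on the grid, ε > 0), any mesh function Ψ on the grid satisfies |Ψ(x_j,t_k)| ≤ max{ max_k |β₀^{N,M}Ψ(0,t_k)|, max_k |β₁^{N,M}Ψ(1,t_k)|, max_j |Ψ(x_j,0)|, (1/α)·max_{j,k} |L^{N,M}Ψ(x_j,t_k)| } for every mesh point (x_j,t_k). -/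
/-!
Let `|Ψ|` attain its maximum over the grid at a node where, after replacing `Ψ` by `-Ψ`, the
value `Ψ*` of `Ψ` is nonnegative. On the initial line the bound is immediate. At a boundary node
the one-sided difference quotient has the sign that makes `β Ψ ≥ Ψ*`. At an interior node
`D⁻_t Ψ ≥ 0` and `δ²_x Ψ ≤ 0`, so `L Ψ ≥ a Ψ* ≥ α Ψ*`.
-/

namespace DiscreteStability

-- `β₀^{N,M}`, `β₁^{N,M}` and `L^{N,M}`, with `Ψ j k` standing for `Ψ(x_j, t_k)`.
noncomputable def leftBoundaryOp (x : ℕ → ℝ) (Ψ : ℕ → ℕ → ℝ) (k : ℕ) : ℝ :=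
  Ψ 0 k - (Ψ 1 k - Ψ 0 k) / (x 1 - x 0)

noncomputable def rightBoundaryOp (N : ℕ) (x : ℕ → ℝ) (Ψ : ℕ → ℕ → ℝ) (k : ℕ) : ℝ :=
  Ψ N k + (Ψ N k - Ψ (N - 1) k) / (x N - x (N - 1))

noncomputable def diffOp (ε : ℝ) (x t : ℕ → ℝ) (a Ψ : ℕ → ℕ → ℝ) (j k : ℕ) : ℝ :=
  (Ψ j k - Ψ j (k - 1)) / (t k - t (k - 1))
    - ε * (((Ψ (j + 1) k - Ψ j k) / (x (j + 1) - x j)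
          - (Ψ j k - Ψ (j - 1) k) / (x j - x (j - 1)))
        / ((x (j + 1) - x (j - 1)) / 2))
    + a j k * Ψ j k

abbrev InteriorNode (N M : ℕ) := {p : ℕ × ℕ // 1 ≤ p.1 ∧ p.1 < N ∧ 1 ≤ p.2 ∧ p.2 ≤ M}

instance (N M : ℕ) : Finite (InteriorNode N M) :=
  ((Set.finite_Iio N).prod (Set.finite_Iic M)).subset
    (fun _ hp => ⟨hp.2.1, hp.2.2.2⟩) |>.to_subtype

noncomputable def stabilityBound (N M : ℕ) (ε α : ℝ) (x t : ℕ → ℝ) (a Ψ : ℕ → ℕ → ℝ) : ℝ :=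
  max (max (⨆ k : Fin (M + 1), |leftBoundaryOp x Ψ k|)
      (⨆ k : Fin (M + 1), |rightBoundaryOp N x Ψ k|))
    (max (⨆ j : Fin (N + 1), |Ψ j 0|)
      ((1 / α) * ⨆ p : InteriorNode N M, |diffOp ε x t a Ψ p.1.1 p.1.2|))

variable {N M : ℕ} {ε α : ℝ} {x t : ℕ → ℝ} {a Ψ : ℕ → ℕ → ℝ}

lemma apply_pred_le (hx : ∀ j < N, x j ≤ x (j + 1)) {j : ℕ} (hj : j ≤ N) :
    x (j - 1) ≤ x j := by
  rcases j with _ | j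
  · exact le_rfl
  · exact hx j (by omega)

lemma le_leftBoundaryOp {k : ℕ} (hx : x 0 ≤ x 1) (hΨ : Ψ 1 k ≤ Ψ 0 k) :
    Ψ 0 k ≤ leftBoundaryOp x Ψ k := by
  have slope_nonpos : (Ψ 1 k - Ψ 0 k) / (x 1 - x 0) ≤ 0 :=
    div_nonpos_of_nonpos_of_nonneg (by linarith) (by linarith)
  unfold leftBoundaryOp
  linarith

lemma le_rightBoundaryOp {k : ℕ} (hx : x (N - 1) ≤ x N) (hΨ : Ψ (N - 1) k ≤ Ψ N k) :
    Ψ N k ≤ rightBoundaryOp N x Ψ k := by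
  have slope_nonneg : 0 ≤ (Ψ N k - Ψ (N - 1) k) / (x N - x (N - 1)) :=
    div_nonneg (by linarith) (by linarith)
  unfold rightBoundaryOp
  linarith

lemma mul_le_diffOp {j k : ℕ} (hε : 0 ≤ ε) (hxl : x (j - 1) ≤ x j) (hxr : x j ≤ x (j + 1))
    (ht : t (k - 1) ≤ t k) (ha : α ≤ a j k) (hΨ : 0 ≤ Ψ j k) (hΨl : Ψ (j - 1) k ≤ Ψ j k)
    (hΨr : Ψ (j + 1) k ≤ Ψ j k) (hΨt : Ψ j (k - 1) ≤ Ψ j k) :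
    α * Ψ j k ≤ diffOp ε x t a Ψ j k := by
  have time_nonneg : 0 ≤ (Ψ j k - Ψ j (k - 1)) / (t k - t (k - 1)) :=
    div_nonneg (by linarith) (by linarith)
  have right_nonpos : (Ψ (j + 1) k - Ψ j k) / (x (j + 1) - x j) ≤ 0 :=
    div_nonpos_of_nonpos_of_nonneg (by linarith) (by linarith)
  have left_nonneg : 0 ≤ (Ψ j k - Ψ (j - 1) k) / (x j - x (j - 1)) :=
    div_nonneg (by linarith) (by linarith)
  have space_nonpos : ((Ψ (j + 1) k - Ψ j k) / (x (j + 1) - x j)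
      - (Ψ j k - Ψ (j - 1) k) / (x j - x (j - 1))) / ((x (j + 1) - x (j - 1)) / 2) ≤ 0 :=
    div_nonpos_of_nonpos_of_nonneg (by linarith) (by linarith)
  have diffusion_nonpos := mul_nonpos_of_nonneg_of_nonpos hε space_nonpos
  have reaction_ge := mul_le_mul_of_nonneg_right ha hΨ
  unfold diffOp
  linarith

lemma le_stabilityBound_of_isMax (hα : 0 < α) (hε : 0 ≤ ε) (hx : ∀ j < N, x j ≤ x (j + 1))
    (ht : ∀ k < M, t k ≤ t (k + 1)) (ha : ∀ j ≤ N, ∀ k ≤ M, α ≤ a j k)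
    {j k : ℕ} (hj : j ≤ N) (hk : k ≤ M) (hmax : ∀ i ≤ N, ∀ l ≤ M, |Ψ i l| ≤ Ψ j k) :
    Ψ j k ≤ stabilityBound N M ε α x t a Ψ := by
  have le_max_of : ∀ {i l}, i ≤ N → l ≤ M → Ψ i l ≤ Ψ j k :=
    fun hi hl => (le_abs_self _).trans (hmax _ hi _ hl)
  unfold stabilityBound
  obtain rfl | hk₁ := Nat.eq_zero_or_pos k
  · refine le_max_of_le_right (le_max_of_le_left ?_)
    exact le_ciSup_of_le (Finite.bddAbove_range _) ⟨j, by omega⟩ (le_abs_self _)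
  obtain rfl | hjN := eq_or_lt_of_le hj
  · refine le_max_of_le_left (le_max_of_le_right ?_)
    refine (le_rightBoundaryOp (apply_pred_le hx le_rfl) (le_max_of (by omega) hk)).trans ?_
    exact le_ciSup_of_le (Finite.bddAbove_range _) ⟨k, by omega⟩ (le_abs_self _)
  obtain rfl | hj₁ := Nat.eq_zero_or_pos j
  · refine le_max_of_le_left (le_max_of_le_left ?_)
    refine (le_leftBoundaryOp (hx 0 hjN) (le_max_of (by omega) hk)).trans ?_
    exact le_ciSup_of_le (Finite.bddAbove_range _) ⟨k, by omega⟩ (le_abs_self _)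
  refine le_max_of_le_right (le_max_of_le_right ?_)
  have hαL : α * Ψ j k ≤ diffOp ε x t a Ψ j k :=
    mul_le_diffOp hε (apply_pred_le hx hj) (hx j hjN) (apply_pred_le ht hk) (ha j hj k hk)
      ((abs_nonneg _).trans (hmax j hj k hk)) (le_max_of (by omega) hk)
      (le_max_of (by omega) hk) (le_max_of hj (by omega))
  have hL : diffOp ε x t a Ψ j k ≤ ⨆ p : InteriorNode N M, |diffOp ε x t a Ψ p.1.1 p.1.2| :=
    le_ciSup_of_le (Finite.bddAbove_range _) ⟨(j, k), hj₁, hjN, hk₁, hk⟩ (le_abs_self _)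
  rw [one_div_mul_eq_div, le_div_iff₀ hα, mul_comm]
  exact hαL.trans hL

lemma stabilityBound_neg :
    stabilityBound N M ε α x t a (-Ψ) = stabilityBound N M ε α x t a Ψ := by
  have hl : ∀ k, leftBoundaryOp x (-Ψ) k = -leftBoundaryOp x Ψ k := fun k => by
    simp only [leftBoundaryOp, Pi.neg_apply]; ring
  have hr : ∀ k, rightBoundaryOp N x (-Ψ) k = -rightBoundaryOp N x Ψ k := fun k => by
    simp only [rightBoundaryOp, Pi.neg_apply]; ring
  have hd : ∀ j k, diffOp ε x t a (-Ψ) j k = -diffOp ε x t a Ψ j k := fun j k => by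
    simp only [diffOp, Pi.neg_apply]; ring
  simp only [stabilityBound, hl, hr, hd, Pi.neg_apply, abs_neg]

theorem abs_le_stabilityBound (hα : 0 < α) (hε : 0 ≤ ε) (hx : ∀ j < N, x j ≤ x (j + 1))
    (ht : ∀ k < M, t k ≤ t (k + 1)) (ha : ∀ j ≤ N, ∀ k ≤ M, α ≤ a j k)
    {j k : ℕ} (hj : j ≤ N) (hk : k ≤ M) :
    |Ψ j k| ≤ stabilityBound N M ε α x t a Ψ := by
  obtain ⟨⟨j₀, k₀⟩, hmem, hmax⟩ := (Finset.range (N + 1) ×ˢ Finset.range (M + 1)).exists_max_image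
    (fun p => |Ψ p.1 p.2|) ⟨(0, 0), by simp⟩
  simp only [Finset.mem_product, Finset.mem_range] at hmem
  have hmax' : ∀ i ≤ N, ∀ l ≤ M, |Ψ i l| ≤ |Ψ j₀ k₀| := fun i hi l hl =>
    hmax (i, l) (by simp only [Finset.mem_product, Finset.mem_range]; omega)
  refine (hmax' j hj k hk).trans ?_
  rcases le_or_gt 0 (Ψ j₀ k₀) with hpos | hneg
  · rw [abs_of_nonneg hpos] at hmax' ⊢
    exact le_stabilityBound_of_isMax hα hε hx ht ha (by omega) (by omega) hmax'
  · rw [abs_of_neg hneg] at hmax' ⊢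
    rw [← stabilityBound_neg]
    exact le_stabilityBound_of_isMax (Ψ := -Ψ) hα hε hx ht ha (by omega) (by omega)
      (by simpa only [Pi.neg_apply, abs_neg] using hmax')

end DiscreteStability

open DiscreteStability in
theorem stmt_10_general (N M : ℕ)
    (ε α : ℝ) (hε : 0 < ε) (hα : 0 < α)
    (x t : ℕ → ℝ)
    (hxmono : ∀ j, j < N → x j < x (j + 1))
    (htmono : ∀ k, k < M → t k < t (k + 1))
    (a Ψ : ℕ → ℕ → ℝ)
    (ha : ∀ j ≤ N, ∀ k ≤ M, α < a j k) :
    ∀ j ≤ N, ∀ k ≤ M,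
      |Ψ j k| ≤
        max (max (⨆ k' : Fin (M + 1), |Ψ 0 k' - (Ψ 1 k' - Ψ 0 k') / (x 1 - x 0)|)
                 (⨆ k' : Fin (M + 1),
                   |Ψ N k' + (Ψ N k' - Ψ (N - 1) k') / (x N - x (N - 1))|))
            (max (⨆ j' : Fin (N + 1), |Ψ j' 0|)
                 ((1 / α) *
                  ⨆ p : {p : ℕ × ℕ // 1 ≤ p.1 ∧ p.1 < N ∧ 1 ≤ p.2 ∧ p.2 ≤ M},
                    |(Ψ (p : ℕ × ℕ).1 (p : ℕ × ℕ).2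
                        - Ψ (p : ℕ × ℕ).1 ((p : ℕ × ℕ).2 - 1))
                        / (t (p : ℕ × ℕ).2 - t ((p : ℕ × ℕ).2 - 1))
                      - ε * (((Ψ ((p : ℕ × ℕ).1 + 1) (p : ℕ × ℕ).2
                              - Ψ (p : ℕ × ℕ).1 (p : ℕ × ℕ).2)
                              / (x ((p : ℕ × ℕ).1 + 1) - x (p : ℕ × ℕ).1)
                            - (Ψ (p : ℕ × ℕ).1 (p : ℕ × ℕ).2
                              - Ψ ((p : ℕ × ℕ).1 - 1) (p : ℕ × ℕ).2)
                              / (x (p : ℕ × ℕ).1 - x ((p : ℕ × ℕ).1 - 1)))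
                          / ((x ((p : ℕ × ℕ).1 + 1) - x ((p : ℕ × ℕ).1 - 1)) / 2))
                      + a (p : ℕ × ℕ).1 (p : ℕ × ℕ).2
                          * Ψ (p : ℕ × ℕ).1 (p : ℕ × ℕ).2|)) :=
  fun _ hj _ hk => abs_le_stabilityBound hα hε.le (fun j hj => (hxmono j hj).le)
    (fun k hk => (htmono k hk).le) (fun j hj k hk => (ha j hj k hk).le) hj hk

/-- Discrete stability result for the finite difference operator. -/
theorem stmt_10 (N M : ℕ) (hN : 2 ≤ N) (hM : 1 ≤ M)
    (ε α : ℝ) (hε : 0 < ε) (hα : 0 < α)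
    (x t : ℕ → ℝ)
    (hx0 : x 0 = 0) (hxN : x N = 1) (hxmono : ∀ j, j < N → x j < x (j + 1))
    (ht0 : t 0 = 0) (htmono : ∀ k, k < M → t k < t (k + 1))
    (a Ψ : ℕ → ℕ → ℝ)
    (ha : ∀ j ≤ N, ∀ k ≤ M, α < a j k) :
    ∀ j ≤ N, ∀ k ≤ M,
      |Ψ j k| ≤
        max (max (⨆ k' : Fin (M + 1), |Ψ 0 k' - (Ψ 1 k' - Ψ 0 k') / (x 1 - x 0)|)
                 (⨆ k' : Fin (M + 1),
                   |Ψ N k' + (Ψ N k' - Ψ (N - 1) k') / (x N - x (N - 1))|))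
            (max (⨆ j' : Fin (N + 1), |Ψ j' 0|)
                 ((1 / α) *
                  ⨆ p : {p : ℕ × ℕ // 1 ≤ p.1 ∧ p.1 < N ∧ 1 ≤ p.2 ∧ p.2 ≤ M},
                    |(Ψ (p : ℕ × ℕ).1 (p : ℕ × ℕ).2
                        - Ψ (p : ℕ × ℕ).1 ((p : ℕ × ℕ).2 - 1))
                        / (t (p : ℕ × ℕ).2 - t ((p : ℕ × ℕ).2 - 1))
                      - ε * (((Ψ ((p : ℕ × ℕ).1 + 1) (p : ℕ × ℕ).2
                              - Ψ (p : ℕ × ℕ).1 (p : ℕ × ℕ).2)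
                              / (x ((p : ℕ × ℕ).1 + 1) - x (p : ℕ × ℕ).1)
                            - (Ψ (p : ℕ × ℕ).1 (p : ℕ × ℕ).2
                              - Ψ ((p : ℕ × ℕ).1 - 1) (p : ℕ × ℕ).2)
                              / (x (p : ℕ × ℕ).1 - x ((p : ℕ × ℕ).1 - 1)))
                          / ((x ((p : ℕ × ℕ).1 + 1) - x ((p : ℕ × ℕ).1 - 1)) / 2))
                      + a (p : ℕ × ℕ).1 (p : ℕ × ℕ).2
                          * Ψ (p : ℕ × ℕ).1 (p : ℕ × ℕ).2|)) :=
  stmt_10_general N M ε α hε hα x t hxmono htmono a Ψ ha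
end
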